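/- Let h be a Brouwer homeomorphism of ℝ² and L a Brouwer line for h. Then for all integers m < n, hⁿ(L) ⊂ D(hᵐ(L)); in particular the images hⁿ(L), n ∈ ℤ, are pairwise disjoint. -/

import Mathlib

abbrev Plane := EuclideanSpace ℝ (Fin 2)

def IsotopicToId {X : Type*} [TopologicalSpace X] (f : X → X) : Prop :=
  ∃ F : ℝ → X → X, Continuous (fun p : ℝ × X => F p.1 p.2) ∧
    (∀ t : ℝ, ∃ g : Homeomorph X X, ⇑g = F t) ∧ F 0 = id ∧ F 1 = f

/-- L is a properly embedded topological line in the plane. -/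
def IsProperLine (L : Set Plane) : Prop :=
  ∃ γ : ℝ → Plane, Continuous γ ∧ Function.Injective γ ∧
    Filter.Tendsto γ (Filter.cocompact ℝ) (Filter.cocompact Plane) ∧ Set.range γ = L

/-- L is a Brouwer line for h: a properly embedded line, free under h, which
separates h(L) from h⁻¹(L) (they lie in different components of the complement). -/
def IsBrouwerLine (h : Homeomorph Plane Plane) (L : Set Plane) : Prop :=
  IsProperLine L ∧ L ∩ ⇑h '' L = ∅ ∧
  ∀ x ∈ ⇑h '' L, ∀ y ∈ ⇑h.symm '' L,
    connectedComponentIn Lᶜ x ≠ connectedComponentIn Lᶜ y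

/-!
Let `D` be the component of `Lᶜ` containing `h(L)`. Its closure lies in `D ∪ L`, and `h` maps
both `D` and `L` off `L` (the first because `D` does not contain `h⁻¹(L)`), so `h(closure D)` is
a connected subset of `Lᶜ`. It meets `D` at `h(q)` for a frontier point `q ∈ L` of `D`, hence
`h(D) ⊆ D`. Iterating, `hᵏ⁺¹(L) ⊆ hᵏ(D) ⊆ D` for all `k ≥ 0`, and applying `hᵐ` gives the
inclusions; disjointness follows because `D` misses `L`.
-/

open Set

section ComplementComponent

variable {X : Type*} [TopologicalSpace X] {L : Set X} {x : X}

theorem frontier_connectedComponentIn_compl_subset [LocallyConnectedSpace X] (hL : IsClosed L) :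
    frontier (connectedComponentIn Lᶜ x) ⊆ L := by
  intro y hy
  by_contra hyL
  obtain ⟨z, hzy, hzx⟩ := mem_closure_iff.mp hy.1 _ hL.isOpen_compl.connectedComponentIn
    (mem_connectedComponentIn hyL)
  have hyx : y ∈ connectedComponentIn Lᶜ x := by
    rw [connectedComponentIn_eq hzx, ← connectedComponentIn_eq hzy]
    exact mem_connectedComponentIn hyL
  exact hy.2 (hL.isOpen_compl.connectedComponentIn.interior_eq.symm ▸ hyx)

theorem closure_connectedComponentIn_compl_subset [LocallyConnectedSpace X] (hL : IsClosed L) :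
    closure (connectedComponentIn Lᶜ x) ⊆ connectedComponentIn Lᶜ x ∪ L := by
  rw [closure_eq_interior_union_frontier, hL.isOpen_compl.connectedComponentIn.interior_eq]
  exact union_subset_union_right _ (frontier_connectedComponentIn_compl_subset hL)

theorem nonempty_frontier_connectedComponentIn_compl [PreconnectedSpace X] (hLne : L.Nonempty)
    (hx : x ∉ L) : (frontier (connectedComponentIn Lᶜ x)).Nonempty := by
  refine nonempty_frontier_iff.mpr ⟨⟨x, mem_connectedComponentIn hx⟩, fun huniv => ?_⟩
  obtain ⟨y, hy⟩ := hLne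
  exact absurd hy (connectedComponentIn_subset _ _ (huniv ▸ mem_univ y))

theorem image_subset_connectedComponentIn_compl {f : X → X} (hf : Continuous f)
    (hLconn : IsPreconnected L) (hfL : MapsTo f L Lᶜ) (hx : x ∈ f '' L) :
    f '' L ⊆ connectedComponentIn Lᶜ x :=
  (hLconn.image f hf.continuousOn).subset_connectedComponentIn hx hfL.image_subset

theorem mapsTo_connectedComponentIn_compl [PreconnectedSpace X] [LocallyConnectedSpace X]
    {f : X → X} (hf : Continuous f) (hL : IsClosed L) (hLconn : IsPreconnected L)
    (hLne : L.Nonempty) (hfL : MapsTo f L Lᶜ) (hx : x ∈ f '' L)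
    (hfD : MapsTo f (connectedComponentIn Lᶜ x) Lᶜ) :
    MapsTo f (connectedComponentIn Lᶜ x) (connectedComponentIn Lᶜ x) := by
  set D := connectedComponentIn Lᶜ x
  have hfLD : f '' L ⊆ D := image_subset_connectedComponentIn_compl hf hLconn hfL hx
  obtain ⟨q, hq⟩ := nonempty_frontier_connectedComponentIn_compl hLne (hfL.image_subset hx)
  have hfq : f q ∈ D :=
    hfLD (mem_image_of_mem f (frontier_connectedComponentIn_compl_subset hL hq))
  have hfclosure : f '' closure D ⊆ Lᶜ := by
    rintro _ ⟨y, hy, rfl⟩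
    rcases closure_connectedComponentIn_compl_subset hL hy with hyD | hyL
    exacts [hfD hyD, hfL hyL]
  have hconn : IsPreconnected (f '' closure D) :=
    isPreconnected_connectedComponentIn.closure.image f hf.continuousOn
  have hsub : f '' closure D ⊆ connectedComponentIn Lᶜ (f q) :=
    hconn.subset_connectedComponentIn (mem_image_of_mem f hq.1) hfclosure
  rw [← connectedComponentIn_eq hfq] at hsub
  exact fun y hy => hsub (mem_image_of_mem f (subset_closure hy))

end ComplementComponent

namespace Equiv.Perm

variable {α : Type*} {e : Perm α} {L D : Set α}

theorem image_zpow_subset_image_zpow (hL : e '' L ⊆ D) (hD : MapsTo e D D) {m n : ℤ}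
    (hmn : m < n) : ⇑(e ^ n) '' L ⊆ ⇑(e ^ m) '' D := by
  obtain ⟨k, rfl⟩ : ∃ k : ℕ, n = m + (k + 1 : ℕ) := ⟨(n - m - 1).toNat, by omega⟩
  rw [zpow_add, zpow_natCast, coe_mul, image_comp]
  refine image_mono ?_
  rw [pow_succ, coe_mul, image_comp]
  exact (image_mono hL).trans ((hD.perm_pow k).image_subset)

theorem image_zpow_inter_image_zpow_eq_empty (hL : e '' L ⊆ D) (hD : MapsTo e D D)
    (hLD : _root_.Disjoint L D) {m n : ℤ} (hmn : m ≠ n) :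
    ⇑(e ^ m) '' L ∩ ⇑(e ^ n) '' L = ∅ := by
  wlog hlt : m < n generalizing m n
  · rw [inter_comm]
    exact this hmn.symm (hmn.lt_or_gt.resolve_left hlt)
  have hLD' : _root_.Disjoint (⇑(e ^ m) '' L) (⇑(e ^ m) '' D) :=
    (disjoint_image_iff (e ^ m).injective).mpr hLD
  exact (hLD'.mono_right (image_zpow_subset_image_zpow hL hD hlt)).inter_eq

end Equiv.Perm

theorem IsProperLine.isClosed {L : Set Plane} (hL : IsProperLine L) : IsClosed L := by
  obtain ⟨γ, hγc, -, hγt, rfl⟩ := hL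
  exact (isProperMap_iff_tendsto_cocompact.mpr ⟨hγc, hγt⟩).isClosedMap.isClosed_range

theorem IsProperLine.isConnected {L : Set Plane} (hL : IsProperLine L) : IsConnected L := by
  obtain ⟨γ, hγc, -, -, rfl⟩ := hL
  exact isConnected_range hγc

namespace IsBrouwerLine

variable {h : Homeomorph Plane Plane} {L : Set Plane} {p : Plane}

theorem mapsTo_compl (hL : IsBrouwerLine h L) : MapsTo h L Lᶜ :=
  fun x hx hhx => (eq_empty_iff_forall_notMem.mp hL.2.1) (h x) ⟨hhx, mem_image_of_mem h hx⟩

theorem mapsTo_connectedComponentIn_compl (hL : IsBrouwerLine h L) (hp : p ∈ h '' L) :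
    MapsTo h (connectedComponentIn Lᶜ p) (connectedComponentIn Lᶜ p) := by
  have hhD : MapsTo h (connectedComponentIn Lᶜ p) Lᶜ := fun x hx hhx =>
    hL.2.2 p hp x ⟨h x, hhx, h.symm_apply_apply x⟩ (connectedComponentIn_eq hx)
  exact _root_.mapsTo_connectedComponentIn_compl h.continuous hL.1.isClosed
    hL.1.isConnected.isPreconnected hL.1.isConnected.nonempty hL.mapsTo_compl hp hhD

theorem image_subset_connectedComponentIn_compl (hL : IsBrouwerLine h L) (hp : p ∈ h '' L) :
    h '' L ⊆ connectedComponentIn Lᶜ p :=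
  _root_.image_subset_connectedComponentIn_compl h.continuous hL.1.isConnected.isPreconnected
    hL.mapsTo_compl hp

end IsBrouwerLine

theorem stmt10_general (h : Homeomorph Plane Plane)
    (L : Set Plane) (hL : IsBrouwerLine h L)
    (D : Set Plane) (p : Plane) (hp : p ∈ ⇑h '' L)
    (hDdef : D = connectedComponentIn Lᶜ p) :
    (∀ m n : ℤ, m < n → ⇑(h.toEquiv ^ n) '' L ⊆ ⇑(h.toEquiv ^ m) '' D) ∧
    (∀ m n : ℤ, m ≠ n → (⇑(h.toEquiv ^ m) '' L) ∩ (⇑(h.toEquiv ^ n) '' L) = ∅) := by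
  subst hDdef
  have hLD : h.toEquiv '' L ⊆ connectedComponentIn Lᶜ p :=
    hL.image_subset_connectedComponentIn_compl hp
  have hD : MapsTo h.toEquiv (connectedComponentIn Lᶜ p) (connectedComponentIn Lᶜ p) :=
    hL.mapsTo_connectedComponentIn_compl hp
  have hdisj : Disjoint L (connectedComponentIn Lᶜ p) :=
    disjoint_compl_right.mono_right (connectedComponentIn_subset _ _)
  exact ⟨fun m n => Equiv.Perm.image_zpow_subset_image_zpow hLD hD,
    fun m n => Equiv.Perm.image_zpow_inter_image_zpow_eq_empty hLD hD hdisj⟩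

/-- For m < n one has hⁿ(L) ⊂ hᵐ(D(L)) = D(hᵐ(L)); in particular the iterates of a
Brouwer line are pairwise disjoint. -/
theorem stmt10 (h : Homeomorph Plane Plane)
    (hfree : ∀ x : Plane, h x ≠ x) (hor : IsotopicToId ⇑h)
    (L : Set Plane) (hL : IsBrouwerLine h L)
    (D : Set Plane) (p : Plane) (hp : p ∈ ⇑h '' L)
    (hDdef : D = connectedComponentIn Lᶜ p) :
    (∀ m n : ℤ, m < n → ⇑(h.toEquiv ^ n) '' L ⊆ ⇑(h.toEquiv ^ m) '' D) ∧
    (∀ m n : ℤ, m ≠ n → (⇑(h.toEquiv ^ m) '' L) ∩ (⇑(h.toEquiv ^ n) '' L) = ∅) :=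
  stmt10_general h L hL D p hp hDdef
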